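/- For even exponents m_i = 2l_i (i = 1,...,n) with l = ∑ l_i, and Z = R·U^{(n)} as above with R having density f_R(v) ∝ v^{n-1} g(v²), g(t) = t^{N-1} e^{-a t^s}/(1 + e^{-b t^s})^{2r}, one has E(∏_{i=1}^n Z_i^{2l_i}) = [Γ((1/s)(N + n/2 + l - 1)) Φ*_{2r}(-1,(1/s)(N + n/2 + l - 1), a/b)] / [(n/2)^{[l]} b^{l/s} Γ((1/s)(N + n/2 - 1)) Φ*_{2r}(-1,(1/s)(N + n/2 - 1), a/b)] · ∏_{i=1}^n (2l_i)!/(4^{l_i} l_i!), where x^{[l]} = x(x+1)···(x+l-1) is the rising factorial. -/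

import Mathlib

open MeasureTheory Real Set

/-- Generalized Hurwitz-Lerch zeta function, integral representation. -/
noncomputable def PhiInt (v z s a : ℝ) : ℝ :=
  (1 / Real.Gamma s) *
    ∫ t in Ioi (0:ℝ), t ^ (s - 1) * Real.exp (-a * t) / (1 - z * Real.exp (-t)) ^ v

/-- The GL density generator. -/
noncomputable def glGen (N a b s r : ℝ) (t : ℝ) : ℝ :=
  t ^ (N - 1) * Real.exp (-a * t ^ s) / (1 + Real.exp (-b * t ^ s)) ^ (2 * r)

/-- Rising factorial x^{[l]} = x(x+1)⋯(x+l-1). -/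
noncomputable def ascFac (x : ℝ) (l : ℕ) : ℝ := ∏ i ∈ Finset.range l, (x + i)

/-!
Since `R` and `U` are independent, the moment splits as `E R^(2L) · E ∏ U_i^(2 l_i)`.

Sphere factor: by rotation invariance `∫ ⟪t, x⟫^(2L) dν = ‖t‖^(2L) ∫ x_1^(2L) dν`. Comparing the
coefficients of `t^(2k)` on both sides of this polynomial identity shows that
`∫ ∏ x_i^(2 k_i) dν = γ_{|k|} ∏ (1/2)^[k_i]`, and integrating
`∏ x_i^(2 k_i) · ∑ x_j² = ∏ x_i^(2 k_i)` gives `γ_L = (n/2 + L) γ_(L+1)`, whence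
`γ_L = 1 / (n/2)^[L]`; note `(1/2)^[k] = (2k)!/(4^k k!)`.

Radial factor: the substitution `w = v^(2s)` followed by `w ↦ b w` turns `∫ v^p g(v²) dv` into
`b^(-κ) ∫ u^(κ-1) e^(-(a/b) u) / (1 + e^(-u))^(2r) du = b^(-κ) Γ(κ) Φ*_(2r)(-1, κ, a/b)`.
-/

open RealInnerProductSpace Finset

lemma ascFac_succ (x : ℝ) (j : ℕ) : ascFac x (j + 1) = ascFac x j * (x + j) :=
  prod_range_succ _ _

lemma ascFac_pos {x : ℝ} (hx : 0 < x) (j : ℕ) : 0 < ascFac x j :=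
  prod_pos fun _ _ => by positivity

lemma ascFac_one_half (j : ℕ) :
    ascFac (1 / 2) j = (2 * j).factorial / (4 ^ j * j.factorial) := by
  induction j with
  | zero => simp [ascFac]
  | succ j ih =>
    rw [ascFac_succ, ih, show 2 * (j + 1) = 2 * j + 1 + 1 by ring, Nat.factorial_succ,
      Nat.factorial_succ, Nat.factorial_succ]
    push_cast
    field_simp
    ring

lemma prod_add_single_one {ι M : Type*} [Fintype ι] [DecidableEq ι] [CommMonoid M]
    {f h : ι → ℕ → M} (hf : ∀ i m, f i (m + 1) = f i m * h i m) (k : ι → ℕ) (j : ι) :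
    ∏ i, f i ((k + Pi.single j 1 : ι → ℕ) i) = (∏ i, f i (k i)) * h j (k j) := by
  rw [← mul_prod_erase _ _ (mem_univ j), ← mul_prod_erase _ (fun i => f i (k i)) (mem_univ j),
    prod_congr rfl fun i hi => by rw [Pi.add_apply, Pi.single_eq_of_ne (ne_of_mem_erase hi),
      add_zero]]
  simp only [Pi.add_apply, Pi.single_eq_same, hf]
  exact mul_right_comm _ _ _

lemma multinomial_two_mul_mul_prod_ascFac {ι : Type*} [Fintype ι] (k : ι → ℕ) :
    (Nat.multinomial univ (2 * k) : ℝ) * ∏ i, ascFac (1 / 2) (k i) =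
      Nat.multinomial univ k * ascFac (1 / 2) (∑ i, k i) := by
  have hk := Nat.multinomial_spec univ k
  have h2k := Nat.multinomial_spec univ (2 * k)
  simp only [Pi.mul_apply, Pi.ofNat_apply, ← mul_sum] at h2k
  have hk' : (∏ i, ((k i).factorial : ℝ)) * Nat.multinomial univ k = (∑ i, k i).factorial := by
    exact_mod_cast hk
  have h2k' : (∏ i, ((2 * k i).factorial : ℝ)) * Nat.multinomial univ (2 * k) =
      (2 * ∑ i, k i).factorial := by
    exact_mod_cast h2k
  simp only [ascFac_one_half, prod_div_distrib, prod_mul_distrib, prod_pow_eq_pow_sum]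
  have : (0 : ℝ) < ∏ i, ((k i).factorial : ℝ) := prod_pos fun i _ => by positivity
  have : (0 : ℝ) < ∏ i, ((2 * k i).factorial : ℝ) := prod_pos fun i _ => by positivity
  have : (0 : ℝ) < (∑ i, k i).factorial := by positivity
  field_simp
  linear_combination ((∑ i, k i).factorial : ℝ) * h2k' - ((2 * ∑ i, k i).factorial : ℝ) * hk'

lemma integral_comp_inner_eq_of_norm_eq {E : Type*} [NormedAddCommGroup E] [InnerProductSpace ℝ E]
    [MeasurableSpace E] [BorelSpace E] {ν : Measure E}
    (hrot : ∀ O : E ≃ₗᵢ[ℝ] E, ν.map O = ν) {u w : E} (huw : ‖u‖ = ‖w‖) (f : ℝ → ℝ) :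
    ∫ x, f ⟪u, x⟫ ∂ν = ∫ x, f ⟪w, x⟫ ∂ν := by
  set O : E ≃ₗᵢ[ℝ] E := Submodule.reflection (ℝ ∙ (w - u))ᗮ
  have hOw : O w = u := Submodule.reflection_sub huw.symm
  conv_rhs => rw [← hrot O]
  rw [show (O : E → E) = O.toHomeomorph.toMeasurableEquiv from rfl, integral_map_equiv]
  congr! 2 with x
  rw [← hOw, O.inner_map_eq_flip, Submodule.reflection_symm]
  rfl

section Sphere

variable {ι : Type*} [Fintype ι] {ν : Measure (EuclideanSpace ℝ ι)}

lemma ae_sum_sq_eq_one (hsupp : ν {x | ‖x‖ = 1}ᶜ = 0) : ∀ᵐ x ∂ν, ∑ i, x i ^ 2 = 1 := by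
  filter_upwards [measure_eq_zero_iff_ae_notMem.mp hsupp] with x hx
  simp only [mem_compl_iff, mem_ofPred_eq, not_not] at hx
  rw [← EuclideanSpace.real_norm_sq_eq, hx, one_pow]

lemma integrable_prod_pow [IsFiniteMeasure ν] (hsupp : ν {x | ‖x‖ = 1}ᶜ = 0) (k : ι → ℕ) :
    Integrable (fun x : EuclideanSpace ℝ ι => ∏ i, x i ^ k i) ν := by
  refine (integrable_const (1 : ℝ)).mono' (by fun_prop) ?_
  filter_upwards [measure_eq_zero_iff_ae_notMem.mp hsupp] with x hx
  simp only [mem_compl_iff, mem_ofPred_eq, not_not] at hx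
  rw [norm_prod]
  exact prod_le_one (fun _ _ => norm_nonneg _) fun i _ => by
    rw [norm_pow]; exact pow_le_one₀ (norm_nonneg _) (hx ▸ PiLp.norm_apply_le x i)

lemma integral_sum_mul_pow [DecidableEq ι] [IsFiniteMeasure ν] (hsupp : ν {x | ‖x‖ = 1}ᶜ = 0)
    (t : ι → ℝ) (d : ℕ) :
    ∫ x, (∑ i, t i * x i) ^ d ∂ν = ∑ k ∈ piAntidiag univ d,
      Nat.multinomial univ k * ((∏ i, t i ^ k i) * ∫ x, ∏ i, x i ^ k i ∂ν) := by
  simp_rw [sum_pow_eq_sum_piAntidiag, mul_pow, prod_mul_distrib]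
  rw [integral_finsetSum _ fun k _ => ((integrable_prod_pow hsupp k).const_mul _).const_mul _]
  simp_rw [integral_const_mul]

lemma integral_sum_mul_pow_two_mul [DecidableEq ι]
    (hrot : ∀ O : EuclideanSpace ℝ ι ≃ₗᵢ[ℝ] EuclideanSpace ℝ ι, ν.map O = ν) (i₀ : ι)
    (t : ι → ℝ) (L : ℕ) :
    ∫ x, (∑ i, t i * x i) ^ (2 * L) ∂ν = (∑ i, t i ^ 2) ^ L * ∫ x, x i₀ ^ (2 * L) ∂ν := by
  set u : EuclideanSpace ℝ ι := WithLp.toLp 2 t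
  have hu : ∀ x : EuclideanSpace ℝ ι, ∑ i, t i * x i = ⟪u, x⟫ := fun x => by
    simp [u, PiLp.inner_apply, mul_comm]
  have hw : ‖u‖ = ‖‖u‖ • EuclideanSpace.single i₀ (1 : ℝ)‖ := by
    rw [norm_smul, PiLp.norm_single, norm_one, mul_one, norm_norm]
  simp_rw [hu, integral_comp_inner_eq_of_norm_eq hrot hw (· ^ (2 * L)), inner_smul_left,
    EuclideanSpace.inner_single_left, mul_pow, pow_mul, ← integral_const_mul]
  simp [u, ← EuclideanSpace.real_norm_sq_eq]

open MvPolynomial in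
lemma multinomial_mul_integral_prod_pow_two_mul [DecidableEq ι] [IsFiniteMeasure ν]
    (hsupp : ν {x | ‖x‖ = 1}ᶜ = 0)
    (hrot : ∀ O : EuclideanSpace ℝ ι ≃ₗᵢ[ℝ] EuclideanSpace ℝ ι, ν.map O = ν) (i₀ : ι)
    (k : ι → ℕ) :
    (Nat.multinomial univ (2 * k) : ℝ) * ∫ x, ∏ i, x i ^ (2 * k i) ∂ν =
      Nat.multinomial univ k * ∫ x, x i₀ ^ (2 * ∑ i, k i) ∂ν := by
  set L := ∑ i, k i
  set c := ∫ x, x i₀ ^ (2 * L) ∂ν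
  have hmonomial (k' : ι → ℕ) (t : ι → ℝ) :
      (Finsupp.equivFunOnFinite.symm k').prod (fun i e => t i ^ e) = ∏ i, t i ^ k' i :=
    Finsupp.prod_fintype _ _ fun _ => pow_zero _
  -- both sides are `∫ x, (∑ i, t i * x i) ^ (2 * L) ∂ν` as polynomials in `t`
  have hpoly : ∑ k' ∈ piAntidiag univ (2 * L), monomial (Finsupp.equivFunOnFinite.symm k')
        ((Nat.multinomial univ k' : ℝ) * ∫ x, ∏ i, x i ^ k' i ∂ν) =
      C c * expand 2 ((∑ i, X i : MvPolynomial ι ℝ) ^ L) := by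
    refine MvPolynomial.funext fun t => ?_
    simp only [map_sum, eval_monomial, hmonomial, eval_mul, eval_C, eval_expand, map_pow, eval_X,
      Pi.pow_apply]
    rw [mul_comm c, ← integral_sum_mul_pow_two_mul hrot i₀, integral_sum_mul_pow hsupp]
    exact sum_congr rfl fun _ _ => by ring
  have h2k : Finsupp.equivFunOnFinite.symm (2 * k) = 2 • Finsupp.equivFunOnFinite.symm k := by
    ext i; simp
  have hk : 2 * k ∈ piAntidiag univ (2 * L) := by simp [L, mul_sum]
  have := congrArg (coeff (Finsupp.equivFunOnFinite.symm (2 * k))) hpoly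
  rw [coeff_sum, sum_eq_single_of_mem _ hk fun k' _ hk' => by simp [coeff_monomial, hk'],
    coeff_monomial, if_pos rfl, coeff_C_mul, h2k, coeff_expand_smul _ two_ne_zero,
    coeff_sum_X_pow_of_fintype, Finsupp.multinomial_eq_of_support_subset (subset_univ _),
    if_pos (by simp [Finsupp.sum_fintype, L])] at this
  simpa [mul_comm c] using this

lemma integral_prod_pow_two_mul_eq_sum [DecidableEq ι] [IsFiniteMeasure ν]
    (hsupp : ν {x | ‖x‖ = 1}ᶜ = 0) (k : ι → ℕ) :
    ∫ x, ∏ i, x i ^ (2 * k i) ∂ν =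
      ∑ j, ∫ x, ∏ i, x i ^ (2 * (k + Pi.single j 1 : ι → ℕ) i) ∂ν := by
  have hstep (x : EuclideanSpace ℝ ι) (j : ι) :
      ∏ i, x i ^ (2 * (k + Pi.single j 1 : ι → ℕ) i) = (∏ i, x i ^ (2 * k i)) * x j ^ 2 :=
    prod_add_single_one (f := fun i m => x i ^ (2 * m)) (h := fun i _ => x i ^ 2)
      (fun i m => by ring) k j
  simp_rw [hstep]
  rw [← integral_finsetSum _ fun j _ => by simpa [← hstep] using integrable_prod_pow hsupp _]
  refine integral_congr_ae ?_
  filter_upwards [ae_sum_sq_eq_one hsupp] with x hx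
  rw [← mul_sum, hx, mul_one]

lemma exists_integral_prod_pow_two_mul_eq [Nonempty ι] [IsFiniteMeasure ν]
    (hsupp : ν {x | ‖x‖ = 1}ᶜ = 0)
    (hrot : ∀ O : EuclideanSpace ℝ ι ≃ₗᵢ[ℝ] EuclideanSpace ℝ ι, ν.map O = ν) :
    ∃ γ : ℕ → ℝ, ∀ k : ι → ℕ,
      ∫ x, ∏ i, x i ^ (2 * k i) ∂ν = γ (∑ i, k i) * ∏ i, ascFac (1 / 2) (k i) := by
  classical
  obtain ⟨i₀⟩ := ‹Nonempty ι›
  refine ⟨fun L => (∫ x, x i₀ ^ (2 * L) ∂ν) / ascFac (1 / 2) L, fun k => ?_⟩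
  have hmult := multinomial_mul_integral_prod_pow_two_mul hsupp hrot i₀ k
  have hcomb := multinomial_two_mul_mul_prod_ascFac k
  have : (0 : ℝ) < Nat.multinomial univ (2 * k) := by exact_mod_cast Nat.multinomial_pos _ _
  have := ascFac_pos (one_half_pos (α := ℝ)) (∑ i, k i)
  dsimp only
  rw [div_mul_eq_mul_div, eq_div_iff this.ne']
  refine mul_left_cancel₀ (a := (Nat.multinomial univ (2 * k) : ℝ)) (by positivity) ?_
  linear_combination ascFac (1 / 2) (∑ i, k i) * hmult - (∫ x, x i₀ ^ (2 * ∑ i, k i) ∂ν) * hcomb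

theorem integral_prod_pow_two_mul [Nonempty ι] [IsProbabilityMeasure ν]
    (hsupp : ν {x | ‖x‖ = 1}ᶜ = 0)
    (hrot : ∀ O : EuclideanSpace ℝ ι ≃ₗᵢ[ℝ] EuclideanSpace ℝ ι, ν.map O = ν) (k : ι → ℕ) :
    ∫ x, ∏ i, x i ^ (2 * k i) ∂ν =
      (∏ i, ascFac (1 / 2) (k i)) / ascFac (Fintype.card ι / 2) (∑ i, k i) := by
  classical
  obtain ⟨γ, hγ⟩ := exists_integral_prod_pow_two_mul_eq hsupp hrot
  obtain ⟨i₀⟩ := ‹Nonempty ι›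
  suffices ∀ L, γ L * ascFac (Fintype.card ι / 2) L = 1 by
    rw [hγ, eq_div_iff (ascFac_pos (by positivity) _).ne', mul_right_comm, this, one_mul]
  intro L
  induction L with
  | zero => simpa [ascFac] using (hγ 0).symm
  | succ L ih =>
    set k : ι → ℕ := Pi.single i₀ L
    have hk : ∑ i, k i = L := by simp [k]
    have hk1 (j : ι) : ∑ i, (k + Pi.single j 1 : ι → ℕ) i = L + 1 := by
      simp [sum_add_distrib, hk]
    have hP : 0 < ∏ i, ascFac (1 / 2) (k i) := prod_pos fun i _ => ascFac_pos one_half_pos _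
    have hrec := integral_prod_pow_two_mul_eq_sum hsupp k
    simp only [hγ, hk, hk1,
      prod_add_single_one (f := fun _ => ascFac (1 / 2)) (fun _ => ascFac_succ _), ← mul_sum,
      sum_add_distrib, sum_const, card_univ, nsmul_eq_mul] at hrec
    rw [← Nat.cast_sum, hk] at hrec
    rw [ascFac_succ]
    refine mul_left_cancel₀ hP.ne' ?_
    linear_combination (∏ i, ascFac (1 / 2) (k i)) * ih - ascFac (Fintype.card ι / 2) L * hrec

end Sphere

noncomputable def lerchIntegral (v z s a : ℝ) : ℝ :=
  ∫ t in Ioi (0 : ℝ), t ^ (s - 1) * exp (-a * t) / (1 - z * exp (-t)) ^ v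

lemma Gamma_mul_PhiInt {v z s a : ℝ} (hs : Gamma s ≠ 0) :
    Gamma s * PhiInt v z s a = lerchIntegral v z s a := by
  rw [PhiInt, lerchIntegral, ← mul_assoc, mul_one_div_cancel hs, one_mul]

lemma integral_rpow_mul_comp_rpow_Ioi {σ : ℝ} (hσ : 0 < σ) (q : ℝ) (g : ℝ → ℝ) :
    ∫ x in Ioi (0 : ℝ), x ^ q * g (x ^ σ) =
      σ⁻¹ * ∫ y in Ioi (0 : ℝ), y ^ ((q + 1) / σ - 1) * g y := by
  conv_rhs => rw [← integral_comp_rpow_Ioi_of_pos hσ, ← integral_const_mul]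
  refine setIntegral_congr_fun measurableSet_Ioi fun x (hx : 0 < x) => ?_
  have hq : x ^ (σ - 1) * x ^ (σ * ((q + 1) / σ - 1)) = x ^ q := by
    rw [← rpow_add hx]
    congr 1
    field_simp
    ring
  rw [smul_eq_mul, ← rpow_mul hx.le, ← hq]
  field_simp

lemma integral_eq_rpow_neg_mul_lerchIntegral {b : ℝ} (hb : 0 < b) (v z κ a : ℝ) :
    ∫ w in Ioi (0 : ℝ), w ^ (κ - 1) * exp (-a * w) / (1 - z * exp (-b * w)) ^ v =
      b ^ (-κ) * lerchIntegral v z κ (a / b) := by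
  have h := integral_comp_mul_left_Ioi'
    (fun t => t ^ (κ - 1) * exp (-(a / b) * t) / (1 - z * exp (-t)) ^ v) 0 hb
  rw [mul_zero, smul_eq_mul] at h
  rw [lerchIntegral, ← h, ← mul_assoc, ← integral_const_mul]
  refine setIntegral_congr_fun measurableSet_Ioi fun w (hw : 0 < w) => ?_
  have hb1 : b ^ (-κ) * b * b ^ (κ - 1) = 1 := by
    rw [← rpow_add_one hb.ne', ← rpow_add hb]
    ring_nf
    exact rpow_zero b
  rw [mul_rpow hb.le hw.le, show -(a / b) * (b * w) = -a * w by field_simp, ← neg_mul]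
  linear_combination (-(w ^ (κ - 1) * exp (-a * w) / (1 - z * exp (-b * w)) ^ v)) * hb1

lemma integral_rpow_mul_glGen_sq {N a b s r : ℝ} (hb : 0 < b) (hs : 0 < s) {p κ : ℝ}
    (hκ : 2 * s * κ = 2 * N + p - 1) :
    ∫ v in Ioi (0 : ℝ), v ^ p * glGen N a b s r (v ^ 2) =
      (2 * s)⁻¹ * (b ^ (-κ) * lerchIntegral (2 * r) (-1) κ (a / b)) := by
  have hsq (v : ℝ) (hv : 0 < v) (e : ℝ) : (v ^ 2) ^ e = v ^ (2 * e) := by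
    rw [← rpow_natCast, ← rpow_mul hv.le, Nat.cast_ofNat]
  calc ∫ v in Ioi (0 : ℝ), v ^ p * glGen N a b s r (v ^ 2)
      = ∫ v in Ioi (0 : ℝ), v ^ (p + 2 * (N - 1)) *
          (exp (-a * v ^ (2 * s)) / (1 - (-1) * exp (-b * v ^ (2 * s))) ^ (2 * r)) := by
        refine setIntegral_congr_fun measurableSet_Ioi fun v (hv : 0 < v) => ?_
        rw [glGen, hsq v hv, hsq v hv, rpow_add hv, neg_one_mul, sub_neg_eq_add]
        ring
    _ = (2 * s)⁻¹ * (b ^ (-κ) * lerchIntegral (2 * r) (-1) κ (a / b)) := by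
        refine (integral_rpow_mul_comp_rpow_Ioi (by positivity) _
          (fun w => exp (-a * w) / (1 - (-1) * exp (-b * w)) ^ (2 * r))).trans ?_
        rw [← integral_eq_rpow_neg_mul_lerchIntegral hb]
        congr 2 with w
        rw [mul_div_assoc]
        congr 2
        field_simp
        linarith

lemma integral_withDensity_indicator_div {α : Type*} [MeasurableSpace α] {μ : Measure α}
    {S : Set α} (hS : MeasurableSet S) {h : α → ℝ} (hm : Measurable h) (h0 : ∀ x ∈ S, 0 ≤ h x)
    (φ : α → ℝ) :
    ∫ x, φ x ∂μ.withDensity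
        (fun x => ENNReal.ofReal (S.indicator (fun x => h x / ∫ y in S, h y ∂μ) x)) =
      (∫ x in S, φ x * h x ∂μ) / ∫ y in S, h y ∂μ := by
  set D := ∫ y in S, h y ∂μ
  have hD : 0 ≤ D := setIntegral_nonneg hS h0
  rw [integral_withDensity_eq_integral_toReal_smul (by fun_prop) (by simp), ← integral_div,
    ← integral_indicator hS]
  refine integral_congr_ae (ae_of_all _ fun x => ?_)
  by_cases hx : x ∈ S
  · simp only [indicator_of_mem hx, ENNReal.toReal_ofReal (div_nonneg (h0 x hx) hD), smul_eq_mul]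
    ring
  · simp [hx]

lemma integral_pow_withDensity_glGen {N a b s r d : ℝ} (hb : 0 < b) (hs : 0 < s) (L : ℕ) :
    ∫ v, v ^ (2 * L) ∂(volume.withDensity fun v => ENNReal.ofReal ((Ioi (0 : ℝ)).indicator
      (fun v => v ^ (d - 1) * glGen N a b s r (v ^ 2) /
        ∫ t in Ioi (0 : ℝ), t ^ (d - 1) * glGen N a b s r (t ^ 2)) v)) =
      lerchIntegral (2 * r) (-1) ((N + d / 2 + L - 1) / s) (a / b) /
        (b ^ ((L : ℝ) / s) * lerchIntegral (2 * r) (-1) ((N + d / 2 - 1) / s) (a / b)) := by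
  rw [integral_withDensity_indicator_div measurableSet_Ioi (by unfold glGen; fun_prop)
    fun v (hv : 0 < v) => by unfold glGen; positivity]
  have hmoment : ∫ v in Ioi (0 : ℝ), v ^ (2 * L) * (v ^ (d - 1) * glGen N a b s r (v ^ 2)) =
      ∫ v in Ioi (0 : ℝ), v ^ (2 * L + d - 1) * glGen N a b s r (v ^ 2) := by
    refine setIntegral_congr_fun measurableSet_Ioi fun v (hv : 0 < v) => ?_
    rw [← mul_assoc, ← rpow_natCast, ← rpow_add hv, Nat.cast_mul, Nat.cast_ofNat, add_sub_assoc]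
  rw [hmoment,
    integral_rpow_mul_glGen_sq hb hs (κ := (N + d / 2 + L - 1) / s) (by field_simp; ring),
    integral_rpow_mul_glGen_sq hb hs (κ := (N + d / 2 - 1) / s) (by field_simp; ring),
    show -((N + d / 2 + L - 1) / s) = -((N + d / 2 - 1) / s) - L / s by ring, rpow_sub hb]
  have : 0 < b ^ (-((N + d / 2 - 1) / s)) := by positivity
  have : 0 < b ^ ((L : ℝ) / s) := by positivity
  field_simp

theorem even_product_moment_general (n : ℕ) (hn : 0 < n) (N a b s r : ℝ)
    (hb : 0 < b) (hs : 0 < s) (hNn : 2 < 2 * N + n)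
    (l : Fin n → ℕ)
    (ν : Measure (EuclideanSpace ℝ (Fin n))) [IsProbabilityMeasure ν]
    (hsupp : ν {x | ‖x‖ = 1}ᶜ = 0)
    (hrot : ∀ O : EuclideanSpace ℝ (Fin n) ≃ₗᵢ[ℝ] EuclideanSpace ℝ (Fin n),
      Measure.map O ν = ν)
    (μR : Measure ℝ)
    (hμR : μR = volume.withDensity fun v =>
      ENNReal.ofReal (Set.indicator (Ioi (0:ℝ))
        (fun v => v ^ ((n : ℝ) - 1) * glGen N a b s r (v ^ 2) /
          ∫ t in Ioi (0:ℝ), t ^ ((n : ℝ) - 1) * glGen N a b s r (t ^ 2)) v)) :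
    ∫ p : ℝ × EuclideanSpace ℝ (Fin n), ∏ i, (p.1 * p.2 i) ^ (2 * l i)
        ∂(μR.prod ν)
      = Real.Gamma ((1 / s) * (N + (n : ℝ) / 2 + (∑ i, l i) - 1)) *
          PhiInt (2 * r) (-1) ((1 / s) * (N + (n : ℝ) / 2 + (∑ i, l i) - 1)) (a / b) /
          (ascFac ((n : ℝ) / 2) (∑ i, l i) * b ^ ((∑ i, (l i : ℝ)) / s) *
            Real.Gamma ((1 / s) * (N + (n : ℝ) / 2 - 1)) *
            PhiInt (2 * r) (-1) ((1 / s) * (N + (n : ℝ) / 2 - 1)) (a / b)) *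
          ∏ i, ((2 * l i).factorial : ℝ) / (4 ^ (l i) * (l i).factorial) := by
  have : Nonempty (Fin n) := ⟨⟨0, hn⟩⟩
  have hNn' : (2 : ℝ) < 2 * N + n := by exact_mod_cast hNn
  have hΓ (m : ℝ) (hm : 0 ≤ m) : Gamma ((N + n / 2 + m - 1) / s) ≠ 0 :=
    (Gamma_pos_of_pos (div_pos (by linarith) hs)).ne'
  have hfactor (p : ℝ × EuclideanSpace ℝ (Fin n)) :
      ∏ i, (p.1 * p.2 i) ^ (2 * l i) = p.1 ^ (2 * ∑ i, l i) * ∏ i, p.2 i ^ (2 * l i) := by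
    rw [mul_sum, ← prod_pow_eq_pow_sum, ← prod_mul_distrib]
    simp_rw [mul_pow]
  subst hμR
  simp_rw [hfactor]
  rw [integral_prod_mul (fun v : ℝ => v ^ (2 * ∑ i, l i))
      (fun x : EuclideanSpace ℝ (Fin n) => ∏ i, x i ^ (2 * l i)),
    integral_pow_withDensity_glGen hb hs, integral_prod_pow_two_mul hsupp hrot, Fintype.card_fin,
    ← Gamma_mul_PhiInt (hΓ _ (Nat.cast_nonneg _)), ← Gamma_mul_PhiInt (by simpa using hΓ 0 le_rfl)]
  simp only [one_div_mul_eq_div, ascFac_one_half, Nat.cast_sum]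
  ring

/-- Even product moments of Z = R·U, U uniform on the unit sphere, R with density
∝ v^{n-1} g(v²). -/
theorem even_product_moment (n : ℕ) (hn : 0 < n) (N a b s r : ℝ)
    (ha : 0 < a) (hb : 0 < b) (hs : 0 < s) (hr : 0 ≤ r) (hNn : 2 < 2 * N + n)
    (l : Fin n → ℕ)
    (ν : Measure (EuclideanSpace ℝ (Fin n))) [IsProbabilityMeasure ν]
    (hsupp : ν {x | ‖x‖ = 1}ᶜ = 0)
    (hrot : ∀ O : EuclideanSpace ℝ (Fin n) ≃ₗᵢ[ℝ] EuclideanSpace ℝ (Fin n),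
      Measure.map O ν = ν)
    (μR : Measure ℝ)
    (hμR : μR = volume.withDensity fun v =>
      ENNReal.ofReal (Set.indicator (Ioi (0:ℝ))
        (fun v => v ^ ((n : ℝ) - 1) * glGen N a b s r (v ^ 2) /
          ∫ t in Ioi (0:ℝ), t ^ ((n : ℝ) - 1) * glGen N a b s r (t ^ 2)) v)) :
    ∫ p : ℝ × EuclideanSpace ℝ (Fin n), ∏ i, (p.1 * p.2 i) ^ (2 * l i)
        ∂(μR.prod ν)
      = Real.Gamma ((1 / s) * (N + (n : ℝ) / 2 + (∑ i, l i) - 1)) *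
          PhiInt (2 * r) (-1) ((1 / s) * (N + (n : ℝ) / 2 + (∑ i, l i) - 1)) (a / b) /
          (ascFac ((n : ℝ) / 2) (∑ i, l i) * b ^ ((∑ i, (l i : ℝ)) / s) *
            Real.Gamma ((1 / s) * (N + (n : ℝ) / 2 - 1)) *
            PhiInt (2 * r) (-1) ((1 / s) * (N + (n : ℝ) / 2 - 1)) (a / b)) *
          ∏ i, ((2 * l i).factorial : ℝ) / (4 ^ (l i) * (l i).factorial) :=
  even_product_moment_general n hn N a b s r hb hs hNn l ν hsupp hrot μR hμR
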